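/- A type-2 path with endpoints of type 0 in a barycentric subdivision of an embedded graph is an induced subgraph. -/

import Mathlib

/-- A combinatorial map (embedded multigraph): a finite nonempty set of darts
(oriented edges) with a fixed-point-free involution pairing darts into edges and
a rotation permutation whose orbits are the vertices; connectivity is required. -/
structure CombMap where
  D : Type
  [fintypeD : Fintype D]
  [nonemptyD : Nonempty D]
  inv : Equiv.Perm D
  inv_invol : ∀ d, inv (inv d) = d
  inv_ne : ∀ d, inv d ≠ d
  rot : Equiv.Perm D
  conn : ∀ d d' : D,
    ∃ g ∈ Subgroup.closure ({rot, inv} : Set (Equiv.Perm D)), g d = d'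

attribute [instance] CombMap.fintypeD CombMap.nonemptyD

namespace CombMap

variable (G : CombMap)

def vertexSetoid : Setoid G.D :=
  ⟨G.rot.SameCycle,
   ⟨fun _ => ⟨0, by simp⟩, Equiv.Perm.SameCycle.symm, Equiv.Perm.SameCycle.trans⟩⟩

def Vertex : Type := Quotient G.vertexSetoid

def vertexOf (d : G.D) : G.Vertex := Quotient.mk G.vertexSetoid d

/-- The facial permutation; its orbits are the faces. -/
def facePerm : Equiv.Perm G.D := G.rot * G.inv

def faceSetoid : Setoid G.D :=
  ⟨G.facePerm.SameCycle,
   ⟨fun _ => ⟨0, by simp⟩, Equiv.Perm.SameCycle.symm, Equiv.Perm.SameCycle.trans⟩⟩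

def Face : Type := Quotient G.faceSetoid

def faceOf (d : G.D) : G.Face := Quotient.mk G.faceSetoid d

def edgeSetoid : Setoid G.D :=
  ⟨fun d d' => d' = d ∨ d' = G.inv d, by
    constructor
    · exact fun x => Or.inl rfl
    · rintro x y (rfl | rfl)
      · exact Or.inl rfl
      · exact Or.inr (G.inv_invol x).symm
    · rintro x y z (rfl | rfl) h2
      · exact h2
      · rcases h2 with rfl | rfl
        · exact Or.inr rfl
        · exact Or.inl (G.inv_invol x)⟩

def Edge : Type := Quotient G.edgeSetoid

def edgeOf (d : G.D) : G.Edge := Quotient.mk G.edgeSetoid d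

noncomputable def eulerChar : ℤ :=
  (Nat.card G.Vertex : ℤ) - (Nat.card G.Edge : ℤ) + (Nat.card G.Face : ℤ)

def IsPlane : Prop := G.eulerChar = 2

def HasGenus (g : ℕ) : Prop := G.eulerChar = 2 - 2 * (g : ℤ)

def Adj (u w : G.Vertex) : Prop :=
  ∃ d, G.vertexOf d = u ∧ G.vertexOf (G.inv d) = w

noncomputable def degree (v : G.Vertex) : ℕ := Nat.card {d : G.D // G.vertexOf d = v}

def edgeJoins (e : G.Edge) (u w : G.Vertex) : Prop :=
  ∃ d, G.edgeOf d = e ∧ G.vertexOf d = u ∧ G.vertexOf (G.inv d) = w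

/-- Reachability by walks avoiding the vertex set `X`. -/
def ReachAvoiding (X : Set G.Vertex) : G.Vertex → G.Vertex → Prop :=
  Relation.ReflTransGen (fun a b => a ∉ X ∧ b ∉ X ∧ G.Adj a b)

def TwoConnected : Prop :=
  3 ≤ Nat.card G.Vertex ∧
    ∀ v u w : G.Vertex, u ≠ v → w ≠ v → G.ReachAvoiding {v} u w

def ThreeConnected : Prop :=
  4 ≤ Nat.card G.Vertex ∧
    ∀ x y u w : G.Vertex, u ∉ ({x, y} : Set G.Vertex) →
      w ∉ ({x, y} : Set G.Vertex) → G.ReachAvoiding {x, y} u w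

/-- No loops and no multiple edges. -/
def Simple : Prop :=
  (∀ d, G.vertexOf d ≠ G.vertexOf (G.inv d)) ∧
  ∀ d d', G.vertexOf d = G.vertexOf d' →
    G.vertexOf (G.inv d) = G.vertexOf (G.inv d') → G.edgeOf d = G.edgeOf d'

/-- Every facial walk has length exactly three. -/
def Triangulated : Prop :=
  ∀ d, G.facePerm d ≠ d ∧ G.facePerm (G.facePerm (G.facePerm d)) = d

def boundaryV (f : G.Face) : Set G.Vertex :=
  {v | ∃ d, G.faceOf d = f ∧ G.vertexOf d = v}

def boundaryE (f : G.Face) : Set G.Edge :=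
  {e | ∃ d, G.faceOf d = f ∧ G.edgeOf d = e}

/-- A polyhedral embedding: simple, and any two distinct faces meet in
nothing, exactly one vertex, or exactly one edge (with its two endpoints). -/
def Polyhedral : Prop :=
  G.Simple ∧ ∀ f g : G.Face, f ≠ g →
    (G.boundaryV f ∩ G.boundaryV g = ∅) ∨
    (∃ v, G.boundaryV f ∩ G.boundaryV g = {v} ∧ G.boundaryE f ∩ G.boundaryE g = ∅) ∨
    (∃ e v w, v ≠ w ∧ G.edgeJoins e v w ∧ G.boundaryE f ∩ G.boundaryE g = {e} ∧
      G.boundaryV f ∩ G.boundaryV g = {v, w})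

/-- The dual embedded graph: same darts, same edge involution, rotation given
by the facial permutation, so that vertices of the dual are faces of `G`. -/
def dual : CombMap where
  D := G.D
  fintypeD := G.fintypeD
  nonemptyD := G.nonemptyD
  inv := G.inv
  inv_invol := G.inv_invol
  inv_ne := G.inv_ne
  rot := G.facePerm
  conn := by
    intro d d'
    obtain ⟨g, hg, hgd⟩ := G.conn d d'
    refine ⟨g, ?_, hgd⟩
    have hinv2 : G.inv * G.inv = 1 := by
      ext x
      simp [Equiv.Perm.mul_apply, G.inv_invol]
    have hrot : G.rot = G.facePerm * G.inv := by
      rw [facePerm, mul_assoc, hinv2, mul_one]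
    have hsub : ({G.rot, G.inv} : Set (Equiv.Perm G.D)) ⊆
        ↑(Subgroup.closure ({G.facePerm, G.inv} : Set (Equiv.Perm G.D))) := by
      rintro x (rfl | rfl)
      · rw [SetLike.mem_coe, hrot]
        exact mul_mem (Subgroup.subset_closure (Set.mem_insert _ _))
          (Subgroup.subset_closure (Set.mem_insert_of_mem _ rfl))
      · exact Subgroup.subset_closure (Set.mem_insert_of_mem _ rfl)
    exact (Subgroup.closure_le _).2 hsub hg

end CombMap

/-- An embedded graph whose darts are labelled by the types (in `{0,1,2}`) of
their vertices; the label is constant on rotation orbits. -/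
structure LabMap extends CombMap where
  lab : D → Fin 3
  lab_rot : ∀ d, lab (rot d) = lab d

namespace LabMap

variable (G : LabMap)

lemma lab_zpow (i : ℤ) : ∀ d, G.lab ((G.rot ^ i) d) = G.lab d := by
  induction i using Int.induction_on with
  | zero => intro d; simp
  | succ n ih =>
      intro d
      have h : (G.rot ^ ((n : ℤ) + 1)) d = (G.rot ^ (n : ℤ)) (G.rot d) := by
        rw [zpow_add, zpow_one, Equiv.Perm.mul_apply]
      rw [h, ih, G.lab_rot]
  | pred n ih =>
      intro d
      have h : (G.rot ^ (-(n : ℤ) - 1)) d = (G.rot ^ (-(n : ℤ))) (G.rot⁻¹ d) := by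
        rw [sub_eq_add_neg, zpow_add, zpow_neg_one, Equiv.Perm.mul_apply]
      have h2 : G.lab (G.rot⁻¹ d) = G.lab d := by
        conv_rhs => rw [← (show G.rot (G.rot⁻¹ d) = d from by simp)]
        rw [G.lab_rot]
      rw [h, ih, h2]

/-- The type of a vertex. -/
def vtype : G.toCombMap.Vertex → Fin 3 :=
  Quotient.lift G.lab (by
    intro a b hab
    obtain ⟨i, hi⟩ := hab
    rw [← hi, G.lab_zpow])

/-- The type of an edge: the type in `{0,1,2}` not occurring among the types
of its two endpoints (when these are distinct). -/
def edgeType (d : G.D) : Fin 3 := -(G.lab d + G.lab (G.inv d))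

/-- No edge joins two vertices of the same type. -/
def NoSameTypeEdges : Prop := ∀ d, G.lab (G.inv d) ≠ G.lab d

end LabMap

/-- Witness data exhibiting `B` as the barycentric subdivision of `G`:
type-0/1/2 vertices of `B` correspond to vertices/edges/faces of `G`, and the
edges of `B` correspond to the incidences (with multiplicity) of `G`:
each dart of `G` gives one edge of `B` of each of the three types. -/
structure BaryStruct (G : CombMap) (B : LabMap) where
  noSame : B.NoSameTypeEdges
  tri : B.toCombMap.Triangulated
  b0 : G.Vertex → B.toCombMap.Vertex
  b1 : G.Edge → B.toCombMap.Vertex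
  b2 : G.Face → B.toCombMap.Vertex
  bBij : Function.Bijective
    (Sum.elim b0 (Sum.elim b1 b2) : G.Vertex ⊕ (G.Edge ⊕ G.Face) → B.toCombMap.Vertex)
  t0 : ∀ v, B.vtype (b0 v) = 0
  t1 : ∀ e, B.vtype (b1 e) = 1
  t2 : ∀ f, B.vtype (b2 f) = 2
  c0 : G.D → B.toCombMap.Edge
  c1 : G.D → B.toCombMap.Edge
  c2 : G.D → B.toCombMap.Edge
  j2 : ∀ d, B.toCombMap.edgeJoins (c2 d) (b0 (G.vertexOf d)) (b1 (G.edgeOf d))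
  j1 : ∀ d, B.toCombMap.edgeJoins (c1 d) (b0 (G.vertexOf d)) (b2 (G.faceOf d))
  j0 : ∀ d, B.toCombMap.edgeJoins (c0 d) (b1 (G.edgeOf d)) (b2 (G.faceOf d))
  cBij : Function.Bijective
    (Sum.elim c0 (Sum.elim c1 c2) : G.D ⊕ (G.D ⊕ G.D) → B.toCombMap.Edge)

def CombMap.IsBary (G : CombMap) (B : LabMap) : Prop := Nonempty (BaryStruct G B)

/-- A local orientation-preserving symmetry-preserving operation. -/
structure Lopsp extends LabMap where
  v0 : toCombMap.Vertex
  v1 : toCombMap.Vertex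
  v2 : toCombMap.Vertex
  plane : toCombMap.IsPlane
  twoConn : toCombMap.TwoConnected
  tri : toCombMap.Triangulated
  noSame : toLabMap.NoSameTypeEdges
  t0 : toLabMap.vtype v0 ≠ 1
  t2 : toLabMap.vtype v2 ≠ 1
  deg_v1 : toLabMap.vtype v1 = 1 → toCombMap.degree v1 = 2
  deg_type1 : ∀ v, v ≠ v0 → v ≠ v1 → v ≠ v2 →
    toLabMap.vtype v = 1 → toCombMap.degree v = 4

namespace Lopsp

/-- The lopsp-operation Dual (three vertices of types 2,1,0; three edges). -/
def IsDual (O : Lopsp) : Prop :=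
  Nat.card O.toLabMap.toCombMap.Vertex = 3 ∧ Nat.card O.toLabMap.toCombMap.Edge = 3 ∧
  O.toLabMap.vtype O.v0 = 2 ∧ O.toLabMap.vtype O.v1 = 1 ∧ O.toLabMap.vtype O.v2 = 0

/-- The identity lopsp-operation (three vertices of types 0,1,2; three edges). -/
def IsIdentity (O : Lopsp) : Prop :=
  Nat.card O.toLabMap.toCombMap.Vertex = 3 ∧ Nat.card O.toLabMap.toCombMap.Edge = 3 ∧
  O.toLabMap.vtype O.v0 = 0 ∧ O.toLabMap.vtype O.v1 = 1 ∧ O.toLabMap.vtype O.v2 = 2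

def EdgeBreaking (O : Lopsp) : Prop :=
  O.toLabMap.toCombMap.Adj O.v1 O.v2 ∧ O.toLabMap.vtype O.v2 = 0

def EdgePreserving (O : Lopsp) : Prop := ¬ O.EdgeBreaking

end Lopsp

/-- Witness data exhibiting the embedded graph `H` as the result `O(G)` of
applying the lopsp-operation `O` to the embedded graph `G`: a barycentric
subdivision `B` of `H` together with the projection `p = π` onto `O`,
a chamber correspondence (chambers of `B` ↔ chambers of `O` × double chambers
of `G`, double chambers being encoded by darts of `G`), and the
identification of the 0-, 1-, 2-points of `B` with the vertices, edges and
faces of `G`. -/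
structure AppData (O : Lopsp) (G H : CombMap) where
  B : LabMap
  bary : BaryStruct H B
  p : B.D → O.toLabMap.D
  p_surj : Function.Surjective p
  p_inv : ∀ d, p (B.toCombMap.inv d) = O.toLabMap.toCombMap.inv (p d)
  p_lab : ∀ d, B.lab d = O.toLabMap.lab (p d)
  chEquiv : B.toCombMap.Face ≃ O.toLabMap.toCombMap.Face × G.D
  copy0 : G.Vertex → B.toCombMap.Vertex
  copy0_inj : Function.Injective copy0
  copy0_spec : ∀ v : G.Vertex, ∀ d : B.D, B.toCombMap.vertexOf d = copy0 v →
    O.toLabMap.toCombMap.vertexOf (p d) = O.v0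
  copy0_surj : ∀ w : B.toCombMap.Vertex,
    (∃ d, B.toCombMap.vertexOf d = w ∧ O.toLabMap.toCombMap.vertexOf (p d) = O.v0) →
    ∃ v, copy0 v = w
  copy1 : G.Edge → B.toCombMap.Vertex
  copy1_inj : Function.Injective copy1
  copy1_spec : ∀ e : G.Edge, ∀ d : B.D, B.toCombMap.vertexOf d = copy1 e →
    O.toLabMap.toCombMap.vertexOf (p d) = O.v1
  copy1_surj : ∀ w : B.toCombMap.Vertex,
    (∃ d, B.toCombMap.vertexOf d = w ∧ O.toLabMap.toCombMap.vertexOf (p d) = O.v1) →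
    ∃ e, copy1 e = w
  copy2 : G.Face → B.toCombMap.Vertex
  copy2_inj : Function.Injective copy2
  copy2_spec : ∀ f : G.Face, ∀ d : B.D, B.toCombMap.vertexOf d = copy2 f →
    O.toLabMap.toCombMap.vertexOf (p d) = O.v2
  copy2_surj : ∀ w : B.toCombMap.Vertex,
    (∃ d, B.toCombMap.vertexOf d = w ∧ O.toLabMap.toCombMap.vertexOf (p d) = O.v2) →
    ∃ f, copy2 f = w
  incid : ∀ d : G.D, ∃ dB : B.D,
    B.toCombMap.vertexOf dB = copy0 (G.vertexOf d) ∧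
    (chEquiv (B.toCombMap.faceOf dB)).2 = d

namespace AppData

variable {O : Lopsp} {G H : CombMap}

/-- The vertex-shadow `S_O(v)` of a vertex `v` of `G`: the vertices of
`O(G)` whose copy in `B_{O(G)}` is of type 0 and adjacent or equal to the
copy of `v`. -/
def shadow (A : AppData O G H) (v : G.Vertex) : Set H.Vertex :=
  {x | A.bary.b0 x = A.copy0 v ∨ A.B.toCombMap.Adj (A.bary.b0 x) (A.copy0 v)}

/-- The face-shadow `S_O(f)` of a face `f` of `G`. -/
def fshadow (A : AppData O G H) (f : G.Face) : Set H.Vertex :=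
  {x | A.bary.b0 x = A.copy2 f ∨ A.B.toCombMap.Adj (A.bary.b0 x) (A.copy2 f)}

end AppData

def Lopsp.Applies (O : Lopsp) (G H : CombMap) : Prop := Nonempty (AppData O G H)

/-- A `c3`-operation: it maps polyhedral embeddings to polyhedral embeddings. -/
def Lopsp.C3 (O : Lopsp) : Prop :=
  ∀ G H : CombMap, G.Polyhedral → O.Applies G H → H.Polyhedral

/-- The list of vertices visited by a list of darts. -/
def CombMap.pathVerts (M : CombMap) : List M.D → List M.Vertex
  | [] => []
  | d :: r => M.vertexOf d :: (d :: r).map (fun x => M.vertexOf (M.inv x))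

/-- A (simple) path given as a nonempty list of consecutive darts visiting
pairwise distinct vertices. -/
def CombMap.IsDartPath (M : CombMap) (p : List M.D) : Prop :=
  p ≠ [] ∧ p.Chain' (fun a b => M.vertexOf (M.inv a) = M.vertexOf b) ∧
    (M.pathVerts p).Nodup

/-!
All vertices of a type-2 path starting and ending at type-0 vertices have type 0 or 1, so a dart
of `B` joining two of them runs between a type-1 vertex `x` and a type-0 vertex. As the ends of
the path have type 0, `x` is interior and the path enters and leaves `x` along two distinct
type-2 edges. But `x` stands for an edge of `G`, and its type-2 edges correspond to the two ends
of that edge, so there are only two of them and the given dart lies on one.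
-/

namespace CombMap

variable {M : CombMap}

theorem edgeOf_eq_edgeOf_iff {x y : M.D} : M.edgeOf x = M.edgeOf y ↔ y = x ∨ y = M.inv x :=
  Quotient.eq

theorem edgeOf_inv (x : M.D) : M.edgeOf (M.inv x) = M.edgeOf x :=
  edgeOf_eq_edgeOf_iff.2 (Or.inr (M.inv_invol x).symm)

theorem vertexOf_of_edgeJoins_edgeOf {x : M.D} {u w : M.Vertex}
    (h : M.edgeJoins (M.edgeOf x) u w) :
    (M.vertexOf x = u ∧ M.vertexOf (M.inv x) = w) ∨
      (M.vertexOf x = w ∧ M.vertexOf (M.inv x) = u) := by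
  obtain ⟨y, hy, hu, hw⟩ := h
  rcases edgeOf_eq_edgeOf_iff.1 hy.symm with rfl | rfl
  · exact Or.inl ⟨hu, hw⟩
  · rw [M.inv_invol] at hw
    exact Or.inr ⟨hw, hu⟩

theorem mem_pathVerts_cons {v : M.Vertex} {a : M.D} {r : List M.D} :
    v ∈ M.pathVerts (a :: r) ↔ v = M.vertexOf a ∨ ∃ e ∈ a :: r, M.vertexOf (M.inv e) = v := by
  simp only [pathVerts, List.mem_cons, List.mem_map]

theorem pathVerts_cons_cons {a b : M.D} (r : List M.D)
    (h : M.vertexOf (M.inv a) = M.vertexOf b) :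
    M.pathVerts (a :: b :: r) = M.vertexOf a :: M.pathVerts (b :: r) := by
  simp [pathVerts, h]

theorem IsDartPath.of_cons_cons {a b : M.D} {r : List M.D} (hp : M.IsDartPath (a :: b :: r)) :
    M.vertexOf (M.inv a) = M.vertexOf b ∧ M.vertexOf a ∉ M.pathVerts (b :: r) ∧
      M.IsDartPath (b :: r) := by
  obtain ⟨-, hchain, hnodup⟩ := hp
  replace hchain := List.isChain_cons_cons.1 hchain
  rw [pathVerts_cons_cons r hchain.1, List.nodup_cons] at hnodup
  exact ⟨hchain.1, hnodup.1, List.cons_ne_nil _ _, hchain.2, hnodup.2⟩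

-- Reusing the edge of `e` right after `e` would revisit a vertex.
theorem IsDartPath.exists_next {p : List M.D} (hp : M.IsDartPath p) {e : M.D} (he : e ∈ p)
    (hlast : p.getLast? ≠ some e) :
    ∃ e' ∈ p, M.vertexOf e' = M.vertexOf (M.inv e) ∧ M.edgeOf e' ≠ M.edgeOf e := by
  induction p with
  | nil => cases he
  | cons a r ih =>
    cases r with
    | nil => simp_all
    | cons b r =>
      obtain ⟨hab, ha, hbr⟩ := hp.of_cons_cons
      rcases List.mem_cons.1 he with rfl | he
      · refine ⟨b, List.mem_cons_of_mem _ List.mem_cons_self, hab.symm, fun hedge => ha ?_⟩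
        rcases edgeOf_eq_edgeOf_iff.1 hedge.symm with rfl | rfl
        · exact mem_pathVerts_cons.2 (Or.inl rfl)
        · exact mem_pathVerts_cons.2 (Or.inr ⟨_, List.mem_cons_self, by rw [M.inv_invol]⟩)
      · obtain ⟨e', he', hv, hedge⟩ := ih hbr he (by simpa using hlast)
        exact ⟨e', List.mem_cons_of_mem _ he', hv, hedge⟩

end CombMap

namespace LabMap

variable {B : LabMap}

@[simp]
theorem vtype_vertexOf (x : B.D) : B.vtype (B.vertexOf x) = B.lab x := rfl

theorem lab_eq_of_vertexOf_eq {x y : B.D} (h : B.vertexOf x = B.vertexOf y) : B.lab x = B.lab y :=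
  congrArg B.vtype h

theorem lab_of_edgeType_eq_two {d : B.D} (hne : B.lab (B.inv d) ≠ B.lab d)
    (h : B.edgeType d = 2) :
    (B.lab d = 0 ∧ B.lab (B.inv d) = 1) ∨ (B.lab d = 1 ∧ B.lab (B.inv d) = 0) := by
  unfold edgeType at h
  generalize B.lab d = a at hne h ⊢
  generalize B.lab (B.inv d) = b at hne h ⊢
  revert a b
  decide

theorem lab_eq_zero_or_one_of_mem_pathVerts (hB : B.NoSameTypeEdges) {p : List B.D}
    (hp : p ≠ []) (h2 : ∀ d ∈ p, B.edgeType d = 2) (hhead : ∀ d, p.head? = some d → B.lab d = 0) :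
    ∀ v ∈ B.pathVerts p, B.vtype v = 0 ∨ B.vtype v = 1 := by
  obtain ⟨a, r, rfl⟩ := List.exists_cons_of_ne_nil hp
  intro v hv
  rcases CombMap.mem_pathVerts_cons.1 hv with rfl | ⟨e, he, rfl⟩
  · exact Or.inl (hhead a rfl)
  · rcases lab_of_edgeType_eq_two (hB e) (h2 e he) with ⟨-, h⟩ | ⟨-, h⟩
    · exact Or.inr h
    · exact Or.inl h

end LabMap

namespace BaryStruct

variable {G : CombMap} {B : LabMap}

theorem b1_injective (S : BaryStruct G B) : Function.Injective S.b1 := fun e e' h => by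
  simpa using S.bBij.1 (a₁ := Sum.inr (Sum.inl e)) (a₂ := Sum.inr (Sum.inl e')) h

theorem exists_c2_of_lab (S : BaryStruct G B) {x : B.D} (h1 : B.lab x = 1)
    (h0 : B.lab (B.inv x) = 0) :
    ∃ g : G.D, B.edgeOf x = S.c2 g ∧ B.vertexOf x = S.b1 (G.edgeOf g) := by
  obtain ⟨g | g | g, hs⟩ := S.cBij.2 (B.edgeOf x)
  · simp only [Sum.elim_inl] at hs
    rcases CombMap.vertexOf_of_edgeJoins_edgeOf (hs ▸ S.j0 g) with ⟨-, h⟩ | ⟨h, -⟩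
    · have := (congrArg B.vtype h).trans (S.t2 _); simp [h0] at this
    · have := (congrArg B.vtype h).trans (S.t2 _); simp [h1] at this
  · simp only [Sum.elim_inr, Sum.elim_inl] at hs
    rcases CombMap.vertexOf_of_edgeJoins_edgeOf (hs ▸ S.j1 g) with ⟨h, -⟩ | ⟨h, -⟩
    · have := (congrArg B.vtype h).trans (S.t0 _); simp [h1] at this
    · have := (congrArg B.vtype h).trans (S.t2 _); simp [h1] at this
  · simp only [Sum.elim_inr] at hs
    rcases CombMap.vertexOf_of_edgeJoins_edgeOf (hs ▸ S.j2 g) with ⟨h, -⟩ | ⟨h, -⟩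
    · have := (congrArg B.vtype h).trans (S.t0 _); simp [h1] at this
    · exact ⟨g, hs.symm, h⟩

theorem edgeOf_eq_or_edgeOf_eq_or_edgeOf_eq (S : BaryStruct G B) {x y z : B.D}
    (hx1 : B.lab x = 1) (hx0 : B.lab (B.inv x) = 0)
    (hy1 : B.lab y = 1) (hy0 : B.lab (B.inv y) = 0)
    (hz1 : B.lab z = 1) (hz0 : B.lab (B.inv z) = 0)
    (hxy : B.vertexOf x = B.vertexOf y) (hxz : B.vertexOf x = B.vertexOf z) :
    B.edgeOf x = B.edgeOf y ∨ B.edgeOf x = B.edgeOf z ∨ B.edgeOf y = B.edgeOf z := by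
  obtain ⟨gx, hx, hgx⟩ := S.exists_c2_of_lab hx1 hx0
  obtain ⟨gy, hy, hgy⟩ := S.exists_c2_of_lab hy1 hy0
  obtain ⟨gz, hz, hgz⟩ := S.exists_c2_of_lab hz1 hz0
  rw [hx, hy, hz]
  rcases CombMap.edgeOf_eq_edgeOf_iff.1 (S.b1_injective (hgx.symm.trans (hxy.trans hgy)))
    with rfl | rfl
  · exact Or.inl rfl
  rcases CombMap.edgeOf_eq_edgeOf_iff.1 (S.b1_injective (hgx.symm.trans (hxz.trans hgz)))
    with rfl | rfl
  · exact Or.inr (Or.inl rfl)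
  · exact Or.inr (Or.inr rfl)

theorem mem_or_inv_mem_of_mem_pathVerts (S : BaryStruct G B) {p : List B.D}
    (hp : B.IsDartPath p) (h2 : ∀ d ∈ p, B.edgeType d = 2)
    (hhead : ∀ d, p.head? = some d → B.lab d = 0)
    (hlast : ∀ d, p.getLast? = some d → B.lab (B.inv d) = 0)
    {y : B.D} (hy1 : B.lab y = 1) (hy0 : B.lab (B.inv y) = 0)
    (hv : B.vertexOf y ∈ B.pathVerts p) :
    y ∈ p ∨ B.inv y ∈ p := by
  have mem_of_edgeOf_eq {e : B.D} (he : e ∈ p) (h : B.edgeOf y = B.edgeOf e) :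
      y ∈ p ∨ B.inv y ∈ p := by
    rcases CombMap.edgeOf_eq_edgeOf_iff.1 h with rfl | rfl
    exacts [Or.inl he, Or.inr he]
  obtain ⟨a, r, rfl⟩ := List.exists_cons_of_ne_nil hp.1
  obtain ⟨e, he, hev⟩ : ∃ e ∈ a :: r, B.vertexOf (B.inv e) = B.vertexOf y := by
    refine (CombMap.mem_pathVerts_cons.1 hv).resolve_left fun h => ?_
    have := LabMap.lab_eq_of_vertexOf_eq h
    simp [hy1, hhead a rfl] at this
  have he1 : B.lab (B.inv e) = 1 := (LabMap.lab_eq_of_vertexOf_eq hev).trans hy1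
  have he0 : B.lab e = 0 := by
    rcases LabMap.lab_of_edgeType_eq_two (S.noSame e) (h2 e he) with ⟨h, -⟩ | ⟨-, h⟩
    · exact h
    · simp [h] at he1
  obtain ⟨e', he', he'v, hedge⟩ := hp.exists_next he fun h => by simp [hlast e h] at he1
  have he'1 : B.lab e' = 1 := (LabMap.lab_eq_of_vertexOf_eq he'v).trans he1
  have he'0 : B.lab (B.inv e') = 0 := by
    rcases LabMap.lab_of_edgeType_eq_two (S.noSame e') (h2 e' he') with ⟨h, -⟩ | ⟨-, h⟩
    · simp [h] at he'1
    · exact h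
  rcases S.edgeOf_eq_or_edgeOf_eq_or_edgeOf_eq hy1 hy0 he1 (by rwa [B.inv_invol]) he'1 he'0
      hev.symm (he'v.trans hev).symm with h | h | h
  · exact mem_of_edgeOf_eq he (h.trans (CombMap.edgeOf_inv e))
  · exact mem_of_edgeOf_eq he' h
  · exact absurd (h.symm.trans (CombMap.edgeOf_inv e)) hedge

end BaryStruct

/-- A type-2 path with endpoints of type 0 in a barycentric
subdivision of an embedded graph is an induced subgraph: every dart of the
barycentric subdivision with both endpoints on the path belongs to the path. -/
theorem type2_path_induced (G : CombMap) (B : LabMap) (S : BaryStruct G B)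
    (p : List B.D) (hp : B.toCombMap.IsDartPath p)
    (h2 : ∀ d ∈ p, B.edgeType d = 2)
    (hhead : ∀ d, p.head? = some d → B.lab d = 0)
    (hlast : ∀ d, p.getLast? = some d → B.lab (B.toCombMap.inv d) = 0) :
    ∀ d : B.D, B.toCombMap.vertexOf d ∈ B.toCombMap.pathVerts p →
      B.toCombMap.vertexOf (B.toCombMap.inv d) ∈ B.toCombMap.pathVerts p →
      d ∈ p ∨ B.toCombMap.inv d ∈ p := by
  intro d hv hw
  have key {y : B.D} := S.mem_or_inv_mem_of_mem_pathVerts hp h2 hhead hlast (y := y)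
  have htype := B.lab_eq_zero_or_one_of_mem_pathVerts S.noSame hp.1 h2 hhead
  rcases htype _ hv with hd | hd <;> rcases htype _ hw with hd' | hd'
  · exact absurd (hd'.trans hd.symm) (S.noSame d)
  · have := key (y := B.inv d) hd' (by rwa [B.inv_invol]) hw
    rwa [B.inv_invol, or_comm] at this
  · exact key hd hd' hv
  · exact absurd (hd'.trans hd.symm) (S.noSame d)
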